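/- arXiv:2408.06095 — 5 statements merged into one kernel-verified Lean document; each statement's English description precedes it below -/
import Mathlib

section
/- Let r₁, r₂, x₁, x₂, y₁, y₂ be integers with r₁ > 0 and r₂ > 0 such that r₁·r₂ = -(r₁·x₂ - r₂·x₁)·(r₁·y₂ - r₂·y₁). Then x₁·x₂ ≥ 0 and y₁·y₂ ≥ 0. -/
lemma key (s t X Y : ℤ) (hs : 0 < s) (ht : 0 < t) (hco : IsCoprime s t)
    (hX : 0 < X) (hY : 0 < Y) (hdvd : (s * X + t * Y) ∣ s * t) : False := by
  set D := s * X + t * Y with hD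
  have hDpos : 0 < D := by positivity
  set s' := gcd D s with hs'
  set t' := gcd D t with ht'
  have hs's : s' ∣ s := gcd_dvd_right D s
  have ht't : t' ∣ t := gcd_dvd_right D t
  have hs'D : s' ∣ D := gcd_dvd_left D s
  have ht'D : t' ∣ D := gcd_dvd_left D t
  -- D ∣ s' * t'
  have h1 : D ∣ gcd D (s * t) := dvd_gcd dvd_rfl hdvd
  have h2 : D ∣ s' * t' := h1.trans (gcd_mul_dvd_mul_gcd D s t)
  -- s' ∣ Y
  have hcs't : IsCoprime s' t := hco.of_isCoprime_of_dvd_left hs's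
  have hs'tY : s' ∣ t * Y := by
    have : t * Y = D - s * X := by ring
    rw [this]
    exact dvd_sub hs'D (hs's.mul_right X)
  have hs'Y : s' ∣ Y := hcs't.dvd_of_dvd_mul_left hs'tY
  -- t' ∣ X
  have hct's : IsCoprime t' s := (hco.symm).of_isCoprime_of_dvd_left ht't
  have ht'sX : t' ∣ s * X := by
    have : s * X = D - t * Y := by ring
    rw [this]
    exact dvd_sub ht'D (ht't.mul_right Y)
  have ht'X : t' ∣ X := hct's.dvd_of_dvd_mul_left ht'sX
  -- sizes
  have hs'pos : 0 < s' := by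
    rw [hs', ← Int.coe_gcd]
    exact_mod_cast Int.gcd_pos_iff.mpr (Or.inr hs.ne')
  have ht'pos : 0 < t' := by
    rw [ht', ← Int.coe_gcd]
    exact_mod_cast Int.gcd_pos_iff.mpr (Or.inr ht.ne')
  have hYs' : s' ≤ Y := Int.le_of_dvd hY hs'Y
  have hXt' : t' ≤ X := Int.le_of_dvd hX ht'X
  have hss' : s' ≤ s := Int.le_of_dvd hs hs's
  have htt' : t' ≤ t := Int.le_of_dvd ht ht't
  have hDle : D ≤ s' * t' := Int.le_of_dvd (by positivity) h2
  nlinarith [mul_le_mul hss' hXt' ht'pos.le hs.le, mul_le_mul htt' hYs' hs'pos.le ht.le]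

lemma aux (s t x1 x2 : ℤ) (hs : 0 < s) (ht : 0 < t) (hco : IsCoprime s t)
    (hdvd : (s * x2 - t * x1) ∣ s * t) : 0 ≤ x1 * x2 := by
  by_contra hneg
  push_neg at hneg
  rcases mul_neg_iff.mp hneg with ⟨h1, h2⟩ | ⟨h1, h2⟩
  · -- x1 > 0, x2 < 0 : -(s*x2 - t*x1) = s*(-x2) + t*x1
    have : (s * (-x2) + t * x1) ∣ s * t := by
      have : s * (-x2) + t * x1 = -(s * x2 - t * x1) := by ring
      rw [this]; exact (neg_dvd).mpr hdvd
    exact key s t (-x2) x1 hs ht hco (by linarith) h1 this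
  · -- x1 < 0, x2 > 0
    have : (s * x2 + t * (-x1)) ∣ s * t := by
      have : s * x2 + t * (-x1) = s * x2 - t * x1 := by ring
      rw [this]; exact hdvd
    exact key s t x2 (-x1) hs ht hco h2 (by linarith) this

theorem stmt_0 (r1 r2 x1 x2 y1 y2 : ℤ) (hr1 : 0 < r1) (hr2 : 0 < r2)
    (h : r1 * r2 = -((r1 * x2 - r2 * x1) * (r1 * y2 - r2 * y1))) :
    0 ≤ x1 * x2 ∧ 0 ≤ y1 * y2 := by
  set d : ℤ := (Int.gcd r1 r2 : ℤ) with hd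
  have hdpos : 0 < d := by
    have := Int.gcd_pos_of_ne_zero_left r2 hr1.ne'
    rw [hd]; exact_mod_cast this
  set s : ℤ := r1 / d with hsdef
  set t : ℤ := r2 / d with htdef
  have hr1d : r1 = d * s := by
    rw [hsdef, Int.mul_ediv_cancel' (Int.gcd_dvd_left r1 r2 : d ∣ r1)]
  have hr2d : r2 = d * t := by
    rw [htdef, Int.mul_ediv_cancel' (Int.gcd_dvd_right r1 r2 : d ∣ r2)]
  have hs : 0 < s := by
    rcases lt_trichotomy s 0 with hh | hh | hh
    · nlinarith
    · rw [hh] at hr1d; simp at hr1d; omega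
    · exact hh
  have ht : 0 < t := by
    rcases lt_trichotomy t 0 with hh | hh | hh
    · nlinarith
    · rw [hh] at hr2d; simp at hr2d; omega
    · exact hh
  have hco : IsCoprime s t := by
    rw [Int.isCoprime_iff_gcd_eq_one]
    exact Int.gcd_div_gcd_div_gcd (by rw [hd] at hdpos; exact_mod_cast hdpos)
  have hprod : (s * x2 - t * x1) * (s * y2 - t * y1) = -(s * t) := by
    have h2 : d * d * ((s * x2 - t * x1) * (s * y2 - t * y1)) = d * d * (-(s * t)) := by
      rw [hr1d, hr2d] at h; nlinarith [h]
    exact mul_left_cancel₀ (by positivity : (d * d : ℤ) ≠ 0) h2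
  constructor
  · exact aux s t x1 x2 hs ht hco ⟨-(s * y2 - t * y1), by linarith⟩
  · exact aux s t y1 y2 hs ht hco ⟨-(s * x2 - t * x1), by linarith⟩
end

section
/- Let a, b, c be integers such that b² - 4ac = n² for some integer n (i.e., the discriminant of the quadratic form is a perfect square). Then there exist integers s, t, x, y such that the matrix identity ((2a, b), (b, 2c)) = ((s, x), (t, y)) · ((0, 1), (1, 0)) · ((s, t), (x, y)) holds; equivalently 2a = 2sx, b = sy + tx, and 2c = 2ty. -/
theorem stmt_1 (a b c n : ℤ) (h : b ^ 2 - 4 * a * c = n ^ 2) :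
    ∃ s t x y : ℤ,
      (!![2 * a, b; b, 2 * c] : Matrix (Fin 2) (Fin 2) ℤ) =
        !![s, x; t, y] * !![0, 1; 1, 0] * !![s, t; x, y] := by
  -- reduce matrix identity to scalar identities
  have key : ∀ s t x y : ℤ, a = s * x → b = x * t + s * y → c = t * y →
      (!![2 * a, b; b, 2 * c] : Matrix (Fin 2) (Fin 2) ℤ) =
        !![s, x; t, y] * !![0, 1; 1, 0] * !![s, t; x, y] := by
    intro s t x y h1 h2 h3
    ext i j
    fin_cases i <;> fin_cases j <;>
      simp [Matrix.mul_apply, Fin.sum_univ_two, h1, h2, h3] <;> ring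
  by_cases ha : a = 0
  · refine ⟨0, 1, b, c, key 0 1 b c ?_ ?_ ?_⟩ <;> simp [ha]
  · -- b and n have the same parity
    have hpar : 2 ∣ b + n := by
      have hdvd2 : (2:ℤ) ∣ (b + n) * (b - n) := ⟨2 * (a * c), by linear_combination h⟩
      rcases Int.prime_two.dvd_or_dvd hdvd2 with h' | h' <;> omega
    obtain ⟨m, hm⟩ := hpar
    have hmc : m * (b - m) = a * c := by
      have h4 : 4 * (m * (b - m)) = 4 * (a * c) := by linear_combination (n + 2 * m - b) * hm + h
      linarith
    set g : ℤ := ↑(Int.gcd a m) with hg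
    have hga : g ∣ a := Int.gcd_dvd_left a m
    have hgm : g ∣ m := Int.gcd_dvd_right a m
    have hgpos : 0 < Int.gcd a m := Int.gcd_pos_of_ne_zero_left m ha
    have hg0 : g ≠ 0 := by positivity
    obtain ⟨a₁, ha₁⟩ := hga
    obtain ⟨m₁, hm₁⟩ := hgm
    have ha₁' : a₁ = a / g := by rw [ha₁]; exact (Int.mul_ediv_cancel_left _ hg0).symm
    have hm₁' : m₁ = m / g := by rw [hm₁]; exact (Int.mul_ediv_cancel_left _ hg0).symm
    have hcop : IsCoprime a₁ m₁ := by
      rw [Int.isCoprime_iff_gcd_eq_one, ha₁', hm₁']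
      exact Int.gcd_div_gcd_div_gcd hgpos
    have ha10 : a₁ ≠ 0 := by rintro rfl; simp at ha₁; exact ha ha₁
    have hmc1 : m₁ * (b - m) = a₁ * c := by
      have : g * (m₁ * (b - m)) = g * (a₁ * c) := by
        rw [← mul_assoc, ← mul_assoc, ← hm₁, ← ha₁]; exact hmc
      exact mul_left_cancel₀ hg0 this
    have hdvd : a₁ ∣ b - m := hcop.dvd_of_dvd_mul_left ⟨c, by linarith [hmc1]⟩
    obtain ⟨y, hy⟩ := hdvd
    have hyc : m₁ * y = c := by
      have : a₁ * (m₁ * y) = a₁ * c := by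
        rw [← hmc1, hy]; ring
      exact mul_left_cancel₀ ha10 this
    exact ⟨a₁, m₁, g, y, key a₁ m₁ g y (by rw [ha₁]; ring)
      (by linear_combination hy + hm₁) hyc.symm⟩
end

section
/- Let a, b, c be integers with b² - 4ac > 0 and b² - 4ac not a perfect square, and suppose the binary quadratic form n(x,y) = a·x² + b·x·y + c·y² represents some negative integer -R (R > 0). Then the form represents -R at infinitely many distinct integer pairs (x, y). -/
/-!
Every solution of the Pell equation `u² - Δ v² = 1` yields an integral automorph of the form
`a x² + b x y + c y²`, and at a point where the form does not vanish distinct Pell solutions give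
distinct image points. Since `Δ > 0` is not a square, the Pell equation has infinitely many
solutions, so the orbit of a point representing `-R` is infinite.
-/

namespace BinaryForm

def eval (a b c : ℤ) (p : ℤ × ℤ) : ℤ := a * p.1 ^ 2 + b * p.1 * p.2 + c * p.2 ^ 2

/-- The substitution with matrix `u + v N`, where `N = [[-b, -2c], [2a, b]]` satisfies `N² = Δ`;
so it represents `u + v √Δ`. -/
def automorph (a b c u v : ℤ) (p : ℤ × ℤ) : ℤ × ℤ :=
  ((u - b * v) * p.1 - 2 * c * v * p.2, 2 * a * v * p.1 + (u + b * v) * p.2)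

variable {a b c : ℤ}

theorem eval_automorph (u v : ℤ) (p : ℤ × ℤ) :
    eval a b c (automorph a b c u v p) = (u ^ 2 - (b ^ 2 - 4 * a * c) * v ^ 2) * eval a b c p := by
  simp only [eval, automorph]
  ring

theorem cross_automorph (u v : ℤ) (p : ℤ × ℤ) :
    p.2 * (automorph a b c u v p).1 - p.1 * (automorph a b c u v p).2 = -2 * v * eval a b c p := by
  simp only [eval, automorph]
  ring

theorem eq_of_automorph_eq {p : ℤ × ℤ} (hp : eval a b c p ≠ 0) {u v u' v' : ℤ}
    (h : automorph a b c u v p = automorph a b c u' v' p) : u = u' ∧ v = v' := by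
  have hv : v = v' := by
    have := cross_automorph (a := a) (b := b) (c := c) u v p
    rw [h, cross_automorph] at this
    refine mul_left_cancel₀ (mul_ne_zero (by norm_num : (-2 : ℤ) ≠ 0) hp) ?_
    linear_combination -this
  subst hv
  refine ⟨?_, rfl⟩
  obtain ⟨h₁, h₂⟩ := Prod.ext_iff.mp h
  simp only [automorph] at h₁ h₂
  have h₁ : (u - u') * p.1 = 0 := by linear_combination h₁
  have h₂ : (u - u') * p.2 = 0 := by linear_combination h₂
  have hp₀ : p.1 ≠ 0 ∨ p.2 ≠ 0 := by
    by_contra! hp₀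
    simp [eval, hp₀] at hp
  rcases hp₀ with hp₀ | hp₀
  · exact sub_eq_zero.mp ((mul_eq_zero.mp h₁).resolve_right hp₀)
  · exact sub_eq_zero.mp ((mul_eq_zero.mp h₂).resolve_right hp₀)

end BinaryForm

theorem Pell.Solution₁.infinite_of_not_isSquare {d : ℤ} (h₀ : 0 < d) (hd : ¬IsSquare d) :
    Infinite (Pell.Solution₁ d) := by
  obtain ⟨s, hs⟩ := Pell.IsFundamental.exists_of_not_isSquare h₀ hd
  exact Infinite.of_injective (s ^ ·) fun m n h => hs.y_strictMono.injective (congrArg _ h)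

open BinaryForm in
theorem stmt_3 (a b c R : ℤ) (hΔ : 0 < b ^ 2 - 4 * a * c)
    (hns : ¬ ∃ n : ℤ, b ^ 2 - 4 * a * c = n ^ 2) (hR : 0 < R)
    (hrep : ∃ x y : ℤ, a * x ^ 2 + b * x * y + c * y ^ 2 = -R) :
    {p : ℤ × ℤ | a * p.1 ^ 2 + b * p.1 * p.2 + c * p.2 ^ 2 = -R}.Infinite := by
  obtain ⟨x₀, y₀, h₀⟩ := hrep
  have h₀ : eval a b c (x₀, y₀) = -R := h₀
  have : Infinite (Pell.Solution₁ (b ^ 2 - 4 * a * c)) :=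
    Pell.Solution₁.infinite_of_not_isSquare hΔ fun ⟨n, hn⟩ => hns ⟨n, by rw [hn, sq]⟩
  refine Set.infinite_of_injective_forall_mem
    (f := fun s : Pell.Solution₁ (b ^ 2 - 4 * a * c) => automorph a b c s.x s.y (x₀, y₀))
    (fun s t h => ?_) fun s => ?_
  · have hne : eval a b c (x₀, y₀) ≠ 0 := by omega
    obtain ⟨hx, hy⟩ := eq_of_automorph_eq hne h
    exact Pell.Solution₁.ext hx hy
  · change eval a b c _ = -R
    rw [eval_automorph, s.prop, one_mul, h₀]
end

section
/- Let L be a free ℤ-module of rank 2 with a symmetric bilinear form of Gram matrix ((2n, k), (k, 2m)) (n, m, k integers), with discriminant Δ = k² - 4nm a positive perfect square. Then there do NOT exist elements A, B ∈ L and positive integers r₁, r₂ such that A·A > 0, B·B < 0, 2r₂ divides A·A, 2r₁ divides B·B, and (r₁A - r₂B)·(r₁A - r₂B) = -2r₁r₂. -/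
/-- The symmetric bilinear form on `ℤ × ℤ` with Gram matrix `!![2n, k; k, 2m]`. -/
def gramForm (n k m : ℤ) (v w : ℤ × ℤ) : ℤ :=
  2 * n * v.1 * w.1 + k * (v.1 * w.2 + v.2 * w.1) + 2 * m * v.2 * w.2

/-- A binary quadratic form with square discriminant factors into integer linear forms. -/
lemma factor_lemma (n k m s : ℤ) (hs : k ^ 2 - 4 * n * m = s ^ 2) :
    ∃ a b c d : ℤ, a * c = n ∧ b * d = m ∧ a * d + b * c = k := by
  rcases eq_or_ne n 0 with h0 | h0
  · exact ⟨0, 1, k, m, by rw [h0]; ring, by ring, by ring⟩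
  · have h2 : Even (k ^ 2 - s ^ 2) := ⟨2 * (n * m), by linarith⟩
    have hks : Even (k - s) := by
      rw [Int.even_sub]
      have := Int.even_sub.mp h2
      rw [Int.even_pow, Int.even_pow] at this
      constructor
      · intro h; exact ((this.mp ⟨h, by norm_num⟩).1)
      · intro h; exact ((this.mpr ⟨h, by norm_num⟩).1)
    obtain ⟨t, ht⟩ := hks
    have h4 : (4 : ℤ) * (t * (t + s)) = 4 * (n * m) := by
      linear_combination hs - (k + s + 2 * t) * ht
    have hnm : t * (t + s) = n * m :=
      mul_left_cancel₀ (by norm_num : (4 : ℤ) ≠ 0) h4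
    have hgpos : 0 < Int.gcd n (t + s) :=
      Nat.pos_of_ne_zero (fun h => h0 (Int.gcd_eq_zero_iff.mp h).1)
    set g : ℤ := (Int.gcd n (t + s) : ℤ) with hgdef
    have hgdvdn : g ∣ n := Int.gcd_dvd_left n (t + s)
    have hgdvdp : g ∣ (t + s) := Int.gcd_dvd_right n (t + s)
    have hg0 : g ≠ 0 := by
      rw [hgdef]; exact_mod_cast hgpos.ne'
    set n' : ℤ := n / g with hn'def
    set p' : ℤ := (t + s) / g with hp'def
    have hn : g * n' = n := Int.mul_ediv_cancel' hgdvdn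
    have hp : g * p' = t + s := Int.mul_ediv_cancel' hgdvdp
    have hcop : IsCoprime n' p' := by
      rw [Int.isCoprime_iff_gcd_eq_one]
      exact Int.gcd_div_gcd_div_gcd hgpos
    have hn'0 : n' ≠ 0 := by
      intro h; apply h0; rw [← hn, h, mul_zero]
    have hkey : p' * t = n' * m := by
      apply mul_left_cancel₀ hg0
      linear_combination t * hp + hnm - m * hn
    have hdvd : n' ∣ t := hcop.dvd_of_dvd_mul_left ⟨m, hkey⟩
    obtain ⟨q', hq'⟩ := hdvd
    have hm : p' * q' = m := by
      apply mul_left_cancel₀ hn'0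
      linear_combination hkey - p' * hq'
    exact ⟨g, q', n', p', hn, by linear_combination hm, by linear_combination hp - hq' - ht⟩

/-- Integer lemma, positive configuration. -/
lemma keyPos (r1 r2 p q P Q : ℤ) (hr1 : 0 < r1) (hr2 : 0 < r2)
    (hp : 0 < p) (hq : 0 < q) (hP : 0 < P) (hQ : 0 < Q)
    (hd2 : r2 ∣ p * q) (hd1 : r1 ∣ P * Q)
    (heq : (r1 * p - r2 * P) * (r1 * q + r2 * Q) = -(r1 * r2)) : False := by
  obtain ⟨a, ha⟩ := hd2
  obtain ⟨b, hb⟩ := hd1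
  set u : ℤ := r2 * P - r1 * p with hu
  have hw : 0 < r1 * q + r2 * Q := by positivity
  have huw : u * (r1 * q + r2 * Q) = r1 * r2 := by rw [hu]; linear_combination -heq
  have hu0 : 0 < u := by nlinarith [mul_pos hr1 hr2]
  have hc : u * q = r2 * (P * q - r1 * a) := by rw [hu]; linear_combination (-r1) * ha
  have hd : u * Q = r1 * (r2 * b - p * Q) := by rw [hu]; linear_combination r2 * hb
  have hc1 : 1 ≤ P * q - r1 * a := by nlinarith [mul_pos hu0 hq]
  have hd1' : 1 ≤ r2 * b - p * Q := by nlinarith [mul_pos hu0 hQ]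
  have hfin : r1 * r2 * ((P * q - r1 * a) + (r2 * b - p * Q)) = r1 * r2 := by
    linear_combination (-r1) * hc + (-r2) * hd + huw
  nlinarith [mul_pos hr1 hr2]

/-- Integer lemma, with x1, y1 positive. -/
lemma keyGen (r1 r2 x1 y1 x2 y2 : ℤ) (hr1 : 0 < r1) (hr2 : 0 < r2)
    (hx1 : 0 < x1) (hy1 : 0 < y1) (h2 : x2 * y2 < 0)
    (hd2 : r2 ∣ x1 * y1) (hd1 : r1 ∣ x2 * y2)
    (heq : (r1 * x1 - r2 * x2) * (r1 * y1 - r2 * y2) = -(r1 * r2)) : False := by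
  rcases lt_trichotomy x2 0 with hx2 | hx2 | hx2
  · have hy2 : 0 < y2 := by nlinarith
    exact keyPos r1 r2 y1 x1 y2 (-x2) hr1 hr2 hy1 hx1 hy2 (by linarith)
      (by rwa [mul_comm])
      (by rw [show y2 * -x2 = -(x2 * y2) by ring]; exact dvd_neg.mpr hd1)
      (by linear_combination heq)
  · simp [hx2] at h2
  · have hy2 : y2 < 0 := by nlinarith
    exact keyPos r1 r2 x1 y1 x2 (-y2) hr1 hr2 hx1 hy1 hx2 (by linarith) hd2
      (by rw [show x2 * -y2 = -(x2 * y2) by ring]; exact dvd_neg.mpr hd1)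
      (by linear_combination heq)

/-- Integer lemma, full version. -/
lemma keyFull (r1 r2 x1 y1 x2 y2 : ℤ) (hr1 : 0 < r1) (hr2 : 0 < r2)
    (h1 : 0 < x1 * y1) (h2 : x2 * y2 < 0)
    (hd2 : r2 ∣ x1 * y1) (hd1 : r1 ∣ x2 * y2)
    (heq : (r1 * x1 - r2 * x2) * (r1 * y1 - r2 * y2) = -(r1 * r2)) : False := by
  rcases lt_trichotomy x1 0 with hx1 | hx1 | hx1
  · have hy1 : y1 < 0 := by nlinarith
    exact keyGen r1 r2 (-x1) (-y1) (-x2) (-y2) hr1 hr2 (by linarith) (by linarith)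
      (by nlinarith) (by rw [show -x1 * -y1 = x1 * y1 by ring]; exact hd2)
      (by rw [show -x2 * -y2 = x2 * y2 by ring]; exact hd1)
      (by linear_combination heq)
  · simp [hx1] at h1
  · have hy1 : 0 < y1 := by nlinarith
    exact keyGen r1 r2 x1 y1 x2 y2 hr1 hr2 hx1 hy1 h2 hd2 hd1 heq

theorem stmt_10 (n k m : ℤ) (hpos : 0 < k ^ 2 - 4 * n * m)
    (hsq : ∃ s : ℤ, k ^ 2 - 4 * n * m = s ^ 2) :
    ¬ ∃ (A B : ℤ × ℤ) (r1 r2 : ℤ), 0 < r1 ∧ 0 < r2 ∧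
      0 < gramForm n k m A A ∧ gramForm n k m B B < 0 ∧
      (2 * r2) ∣ gramForm n k m A A ∧ (2 * r1) ∣ gramForm n k m B B ∧
      gramForm n k m (r1 • A - r2 • B) (r1 • A - r2 • B) = -(2 * r1 * r2) := by
  rintro ⟨A, B, r1, r2, hr1, hr2, hA, hB, hdA, hdB, hwall⟩
  obtain ⟨s, hs⟩ := hsq
  obtain ⟨a, b, c, d, hn, hm, hk⟩ := factor_lemma n k m s hs
  subst hn hm hk
  set x1 : ℤ := a * A.1 + b * A.2 with hx1
  set y1 : ℤ := c * A.1 + d * A.2 with hy1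
  set x2 : ℤ := a * B.1 + b * B.2 with hx2
  set y2 : ℤ := c * B.1 + d * B.2 with hy2
  have hQA : gramForm (a * c) (a * d + b * c) (b * d) A A = 2 * (x1 * y1) := by
    simp only [gramForm, hx1, hy1]; ring
  have hQB : gramForm (a * c) (a * d + b * c) (b * d) B B = 2 * (x2 * y2) := by
    simp only [gramForm, hx2, hy2]; ring
  have hW : gramForm (a * c) (a * d + b * c) (b * d) (r1 • A - r2 • B) (r1 • A - r2 • B)
      = 2 * ((r1 * x1 - r2 * x2) * (r1 * y1 - r2 * y2)) := by
    simp only [gramForm, hx1, hy1, hx2, hy2, Prod.fst_sub, Prod.snd_sub, Prod.smul_fst,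
      Prod.smul_snd, smul_eq_mul]
    ring
  rw [hQA] at hA hdA
  rw [hQB] at hB hdB
  rw [hW] at hwall
  have h1 : 0 < x1 * y1 := by linarith
  have h2 : x2 * y2 < 0 := by linarith
  have hd2 : r2 ∣ x1 * y1 := by
    obtain ⟨e, he⟩ := hdA
    exact ⟨e, mul_left_cancel₀ (by norm_num : (2:ℤ) ≠ 0) (by linear_combination he)⟩
  have hd1 : r1 ∣ x2 * y2 := by
    obtain ⟨e, he⟩ := hdB
    exact ⟨e, mul_left_cancel₀ (by norm_num : (2:ℤ) ≠ 0) (by linear_combination he)⟩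
  have heq : (r1 * x1 - r2 * x2) * (r1 * y1 - r2 * y2) = -(r1 * r2) :=
    mul_left_cancel₀ (by norm_num : (2:ℤ) ≠ 0) (by linear_combination hwall)
  exact keyFull r1 r2 x1 y1 x2 y2 hr1 hr2 h1 h2 hd2 hd1 heq
end

section
/- Let L be an even lattice of rank 2 and signature (1,1) with Gram matrix ((2n, k), (k, 2m)) such that Δ = k² - 4nm is not a perfect square. Then there exist elements A, B ∈ L and positive integers r₁, r₂ such that A·A > 0, B·B < 0, 2r₂ ∣ A·A, 2r₁ ∣ B·B, and (r₁A - r₂B)² = -2r₁r₂; in fact infinitely many such quadruples (A, B, r₁, r₂) exist. -/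
section

variable {n k m : ℤ}

lemma gramForm_neg_neg (v : ℤ × ℤ) : gramForm n k m (-v) (-v) = gramForm n k m v v := by
  simp only [gramForm, Prod.fst_neg, Prod.snd_neg]
  ring

lemma gramForm_smul_sub_self (c : ℤ) (v w : ℤ × ℤ) :
    gramForm n k m (c • v - w) (c • v - w) =
      c ^ 2 * gramForm n k m v v - 2 * c * gramForm n k m v w + gramForm n k m w w := by
  simp only [gramForm, Prod.fst_sub, Prod.snd_sub, Prod.smul_fst, Prod.smul_snd, smul_eq_mul]
  ring

lemma gramForm_smul_add_smul_self (a b : ℤ) (v w : ℤ × ℤ) :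
    gramForm n k m (a • v + b • w) (a • v + b • w) =
      a ^ 2 * gramForm n k m v v + 2 * a * b * gramForm n k m v w +
        b ^ 2 * gramForm n k m w w := by
  simp only [gramForm, Prod.fst_add, Prod.snd_add, Prod.smul_fst, Prod.smul_snd, smul_eq_mul]
  ring

variable (n k m) in
def twist (v : ℤ × ℤ) : ℤ × ℤ :=
  (-(k * v.1 + 2 * m * v.2), 2 * n * v.1 + k * v.2)

variable (n k m) in
def pellAct (a : Pell.Solution₁ (k ^ 2 - 4 * n * m)) (v : ℤ × ℤ) : ℤ × ℤ :=
  a.x • v + a.y • twist n k m v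

lemma gramForm_twist_twist (v : ℤ × ℤ) :
    gramForm n k m (twist n k m v) (twist n k m v) =
      -(k ^ 2 - 4 * n * m) * gramForm n k m v v := by
  simp only [gramForm, twist]
  ring

lemma gramForm_twist_right (v : ℤ × ℤ) : gramForm n k m v (twist n k m v) = 0 := by
  simp only [gramForm, twist]
  ring

lemma gramForm_pellAct_pellAct (a : Pell.Solution₁ (k ^ 2 - 4 * n * m)) (v : ℤ × ℤ) :
    gramForm n k m (pellAct n k m a v) (pellAct n k m a v) = gramForm n k m v v := by
  rw [pellAct, gramForm_smul_add_smul_self, gramForm_twist_right, gramForm_twist_twist]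
  linear_combination gramForm n k m v v * a.prop

lemma gramForm_pellAct_right (a : Pell.Solution₁ (k ^ 2 - 4 * n * m)) (v : ℤ × ℤ) :
    gramForm n k m v (pellAct n k m a v) = a.x * gramForm n k m v v := by
  simp only [gramForm, pellAct, twist, Prod.fst_add, Prod.snd_add, Prod.smul_fst,
    Prod.smul_snd, smul_eq_mul]
  ring

lemma gramForm_smul_sub_pellAct_self {B : ℤ × ℤ} {R : ℤ} (hB : gramForm n k m B B = -(2 * R))
    (a : Pell.Solution₁ (k ^ 2 - 4 * n * m)) :
    gramForm n k m (R • B - pellAct n k m a B) (R • B - pellAct n k m a B) =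
      2 * R * (2 * R * a.x - 1 - R ^ 2) := by
  rw [gramForm_smul_sub_self, gramForm_pellAct_right, gramForm_pellAct_pellAct, hB]
  ring

lemma exists_gramForm_self_eq_neg (hn : n ≠ 0) (hpos : 0 < k ^ 2 - 4 * n * m) :
    ∃ B : ℤ × ℤ, ∃ R : ℤ, 0 < R ∧ gramForm n k m B B = -(2 * R) := by
  rcases hn.lt_or_gt with hn | hn
  · exact ⟨(1, 0), -n, by omega, by simp only [gramForm]; ring⟩
  · exact ⟨(-k, 2 * n), n * (k ^ 2 - 4 * n * m), mul_pos hn hpos, by simp only [gramForm]; ring⟩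

end

lemma Pell.Solution₁.exists_lt_x {d : ℤ} (h₀ : 0 < d) (hd : ¬IsSquare d) (N : ℤ) :
    ∃ a : Solution₁ d, N < a.x := by
  suffices h : ∀ j : ℕ, ∃ a : Solution₁ d, 1 + (j : ℤ) < a.x by
    obtain ⟨a, ha⟩ := h N.toNat
    exact ⟨a, by omega⟩
  intro j
  induction j with
  | zero =>
    obtain ⟨a, ha, -⟩ := exists_pos_of_not_isSquare h₀ hd
    exact ⟨a, by simpa using ha⟩
  | succ j ih =>
    obtain ⟨a, ha⟩ := ih
    refine ⟨a * a, ?_⟩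
    rw [x_mul]
    push_cast
    nlinarith [mul_nonneg h₀.le (mul_self_nonneg a.y)]

theorem stmt_11 (n k m : ℤ) (hpos : 0 < k ^ 2 - 4 * n * m)
    (hns : ¬ ∃ s : ℤ, k ^ 2 - 4 * n * m = s ^ 2) :
    {q : (ℤ × ℤ) × (ℤ × ℤ) × ℤ × ℤ |
      0 < q.2.2.1 ∧ 0 < q.2.2.2 ∧
      0 < gramForm n k m q.1 q.1 ∧ gramForm n k m q.2.1 q.2.1 < 0 ∧
      (2 * q.2.2.2) ∣ gramForm n k m q.1 q.1 ∧
      (2 * q.2.2.1) ∣ gramForm n k m q.2.1 q.2.1 ∧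
      gramForm n k m (q.2.2.1 • q.1 - q.2.2.2 • q.2.1)
        (q.2.2.1 • q.1 - q.2.2.2 • q.2.1) = -(2 * q.2.2.1 * q.2.2.2)}.Infinite := by
  have hdns : ¬ IsSquare (k ^ 2 - 4 * n * m) := by
    rintro ⟨s, hs⟩
    exact hns ⟨s, by rw [hs, sq]⟩
  have hn : n ≠ 0 := by
    rintro rfl
    exact hns ⟨k, by ring⟩
  obtain ⟨B, R, hR, hB⟩ := exists_gramForm_self_eq_neg hn hpos
  refine Set.Infinite.of_image (fun q => gramForm n k m q.1 q.1) (Set.infinite_of_not_bddAbove ?_)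
  rintro ⟨M, hM⟩
  obtain ⟨a, ha⟩ := Pell.Solution₁.exists_lt_x hpos hdns (R + |M|)
  set A := R • B - pellAct n k m a B
  have hA : gramForm n k m A A = 2 * R * (2 * R * a.x - 1 - R ^ 2) :=
    gramForm_smul_sub_pellAct_self hB a
  have hAB : (1 : ℤ) • A - R • B = -pellAct n k m a B := by
    rw [one_smul, sub_sub_cancel_left]
  have hAM : |M| < gramForm n k m A A := by
    have hx : 2 * |M| < 2 * R * a.x - 1 - R ^ 2 := by nlinarith [abs_nonneg M]
    rw [hA]
    nlinarith [abs_nonneg M]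
  refine ((le_abs_self M).trans_lt hAM).not_ge
    (hM ⟨(A, B, 1, R), ⟨one_pos, hR, ?_, ?_, ?_, ?_, ?_⟩, rfl⟩)
  · exact (abs_nonneg M).trans_lt hAM
  · rw [hB]
    linarith
  · exact ⟨2 * R * a.x - 1 - R ^ 2, hA⟩
  · exact ⟨-R, by rw [hB]; ring⟩
  · rw [hAB, gramForm_neg_neg, gramForm_pellAct_pellAct, hB, mul_one]
end
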